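/- Let (X, L) be a random vector with values in ℝ × [0,∞) whose law has density h(x,l) = (1/√(2π))·(|x|+l)·exp(−(|x|+l)²/2) with respect to Lebesgue measure on ℝ × [0,∞). Then for every bounded measurable function φ : ℝ → ℝ, E[φ(L)·|X|] = E[∫_0^L φ(x) dx]. -/

import Mathlib

open MeasureTheory ProbabilityTheory Real

/-- The joint density of `(B₁, L₁)`. -/
noncomputable def jointDensity (x l : ℝ) : ℝ :=
  (1 / Real.sqrt (2 * π)) * (|x| + l) * Real.exp (-(|x| + l) ^ 2 / 2)

open Set Filter Topology

/-!
Both sides are integrals against the density `h`. Substituting `y = |x| + l`, one finds for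
every `l` that `∫ h(x, l) dx = 2c e^{-l²/2}` and, integrating `(y - l) y e^{-y²/2}` by parts,
`∫ |x| h(x, l) dx = 2c ∫_l^∞ e^{-y²/2} dy`, where `c = 1/√(2π)`. Hence the left side is
`2c ∫_0^∞ φ(l) ∫_l^∞ e^{-y²/2} dy dl` and the right side is `2c ∫_0^∞ (∫_0^l φ) e^{-l²/2} dl`;
the two agree by exchanging the order of integration over `{0 < u ≤ l}`.
-/

theorem integral_comp_eq_integral_mul_of_map_eq_withDensity {Ω α : Type*} [MeasurableSpace Ω]
    [MeasurableSpace α] {P : Measure Ω} {μ : Measure α} {Y : Ω → α} {f g : α → ℝ}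
    (hY : AEMeasurable Y P) (hf : Measurable f) (hf0 : ∀ a, 0 ≤ f a)
    (hlaw : P.map Y = μ.withDensity fun a => ENNReal.ofReal (f a))
    (hg : AEStronglyMeasurable g (P.map Y)) :
    ∫ ω, g (Y ω) ∂P = ∫ a, f a * g a ∂μ := by
  rw [← integral_map hY hg, hlaw, integral_withDensity_eq_integral_toReal_smul hf.ennreal_ofReal
    (ae_of_all _ fun _ => ENNReal.ofReal_lt_top)]
  simp only [ENNReal.toReal_ofReal (hf0 _), smul_eq_mul]

lemma integrable_ite_le_mul_restrict_Ioi_prod {φ g : ℝ → ℝ} {C : ℝ} (hφ : Measurable φ)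
    (hφC : ∀ x, |φ x| ≤ C) (hg : Measurable g)
    (hgi : IntegrableOn (fun l => l * g l) (Ioi 0)) :
    Integrable (fun p : ℝ × ℝ => if p.2 ≤ p.1 then φ p.2 * g p.1 else 0)
      ((volume.restrict (Ioi 0)).prod (volume.restrict (Ioi 0))) := by
  set F : ℝ × ℝ → ℝ := fun p => if p.2 ≤ p.1 then φ p.2 * g p.1 else 0
  have hF_meas : Measurable F :=
    Measurable.ite (measurableSet_le measurable_snd measurable_fst)
      ((hφ.comp measurable_snd).mul (hg.comp measurable_fst)) measurable_const
  have hF_le (l u : ℝ) : ‖F (l, u)‖ ≤ (Iic l).indicator (fun _ => C * |g l|) u := by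
    by_cases h : u ≤ l
    · simp only [F, if_pos h, indicator_of_mem (mem_Iic.2 h), norm_mul, norm_eq_abs]
      exact mul_le_mul_of_nonneg_right (hφC u) (abs_nonneg _)
    · simp [F, if_neg h, indicator_of_notMem (notMem_Iic.2 (not_le.1 h))]
  have hbound_int (l : ℝ) :
      Integrable ((Iic l).indicator fun _ => C * |g l|) (volume.restrict (Ioi 0)) := by
    refine (integrable_indicator_iff measurableSet_Iic).2 (integrableOn_const ?_)
    rw [Measure.restrict_apply measurableSet_Iic, Iic_inter_Ioi]
    exact measure_Ioc_lt_top.ne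
  refine (integrable_prod_iff hF_meas.aestronglyMeasurable).2 ⟨ae_of_all _ fun l => ?_, ?_⟩
  · exact (hbound_int l).mono' (hF_meas.comp measurable_prodMk_left).aestronglyMeasurable
      (ae_of_all _ (hF_le l))
  refine Integrable.mono' (hgi.norm.const_mul C)
    hF_meas.aestronglyMeasurable.norm.integral_prod_right' ?_
  filter_upwards [ae_restrict_mem measurableSet_Ioi] with l (hl : 0 < l)
  calc ‖∫ u, ‖F (l, u)‖ ∂volume.restrict (Ioi 0)‖
      = ∫ u, ‖F (l, u)‖ ∂volume.restrict (Ioi 0) :=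
        norm_of_nonneg (integral_nonneg fun _ => norm_nonneg _)
    _ ≤ ∫ u, (Iic l).indicator (fun _ => C * |g l|) u ∂volume.restrict (Ioi 0) :=
        integral_mono_of_nonneg (ae_of_all _ fun _ => norm_nonneg _) (hbound_int l)
          (ae_of_all _ (hF_le l))
    _ = C * ‖l * g l‖ := by
      rw [integral_indicator_const _ measurableSet_Iic,
        measureReal_restrict_apply measurableSet_Iic, Iic_inter_Ioi,
        volume_real_Ioc_of_le hl.le, smul_eq_mul, norm_mul, norm_eq_abs, norm_eq_abs,
        abs_of_pos hl]
      ring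

theorem integral_Ioi_intervalIntegral_mul_eq {φ g : ℝ → ℝ} {C : ℝ} (hφ : Measurable φ)
    (hφC : ∀ x, |φ x| ≤ C) (hg : Measurable g)
    (hgi : IntegrableOn (fun l => l * g l) (Ioi 0)) :
    ∫ l in Ioi 0, (∫ u in (0 : ℝ)..l, φ u) * g l
      = ∫ u in Ioi 0, φ u * ∫ l in Ioi u, g l := by
  set F : ℝ → ℝ → ℝ := fun l u => if u ≤ l then φ u * g l else 0
  calc ∫ l in Ioi 0, (∫ u in (0 : ℝ)..l, φ u) * g l
      = ∫ l in Ioi 0, ∫ u in Ioi 0, F l u := by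
        refine setIntegral_congr_fun measurableSet_Ioi fun l (hl : 0 < l) => ?_
        have hF (u : ℝ) : F l u = (Iic l).indicator (fun u => φ u * g l) u := by
          simp only [F, indicator_apply, mem_Iic]
        rw [integral_congr_ae (ae_of_all _ hF), setIntegral_indicator measurableSet_Iic,
          Ioi_inter_Iic, integral_mul_const, intervalIntegral.integral_of_le hl.le]
    _ = ∫ u in Ioi 0, ∫ l in Ioi 0, F l u :=
        integral_integral_swap (integrable_ite_le_mul_restrict_Ioi_prod hφ hφC hg hgi)
    _ = ∫ u in Ioi 0, φ u * ∫ l in Ioi u, g l := by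
        refine setIntegral_congr_fun measurableSet_Ioi fun u (hu : 0 < u) => ?_
        have hF (l : ℝ) : F l u = (Ici u).indicator (fun l => φ u * g l) l := by
          simp only [F, indicator_apply, mem_Ici]
        rw [integral_congr_ae (ae_of_all _ hF), setIntegral_indicator measurableSet_Ici,
          inter_eq_self_of_subset_right (Ici_subset_Ioi.2 hu), integral_Ici_eq_integral_Ioi,
          integral_const_mul]

lemma integral_Ioi_comp_add_right {E : Type*} [NormedAddCommGroup E] [NormedSpace ℝ E]
    (g : ℝ → E) (a l : ℝ) : ∫ x in Ioi a, g (x + l) = ∫ y in Ioi (a + l), g y := by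
  have h := (measurePreserving_add_right volume l).setIntegral_preimage_emb
    (measurableEmbedding_addRight l) g (Ioi (a + l))
  rwa [preimage_add_const_Ioi, add_sub_cancel_right] at h

lemma integral_comp_abs_add (g : ℝ → ℝ) (l : ℝ) :
    ∫ x, g (|x| + l) = 2 * ∫ y in Ioi l, g y := by
  rw [integral_comp_abs (f := fun t => g (t + l)), integral_Ioi_comp_add_right, zero_add]

lemma exp_neg_sq_div_two_eq (x : ℝ) : exp (-x ^ 2 / 2) = exp (-(1 / 2) * x ^ 2) := by
  ring_nf

lemma integrable_exp_neg_sq_div_two : Integrable fun x : ℝ => exp (-x ^ 2 / 2) := by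
  simpa only [exp_neg_sq_div_two_eq] using integrable_exp_neg_mul_sq (b := 1 / 2) (by norm_num)

lemma integrable_mul_exp_neg_sq_div_two : Integrable fun x : ℝ => x * exp (-x ^ 2 / 2) := by
  simpa only [exp_neg_sq_div_two_eq] using integrable_mul_exp_neg_mul_sq (b := 1 / 2) (by norm_num)

lemma integrable_sq_mul_exp_neg_sq_div_two :
    Integrable fun x : ℝ => x ^ 2 * exp (-x ^ 2 / 2) := by
  have := integrable_rpow_mul_exp_neg_mul_sq (b := 1 / 2) (s := 2) (by norm_num) (by norm_num)
  refine this.congr (ae_of_all _ fun x => ?_)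
  simp only [rpow_two, exp_neg_sq_div_two_eq]

lemma tendsto_rpow_mul_exp_neg_sq_div_two (s : ℝ) :
    Tendsto (fun x : ℝ => x ^ s * exp (-x ^ 2 / 2)) atTop (𝓝 0) := by
  simp only [exp_neg_sq_div_two_eq]
  refine (rpow_mul_exp_neg_mul_sq_isLittleO_exp_neg (by norm_num) s).trans_tendsto ?_
  exact tendsto_exp_atBot.comp (tendsto_id.const_mul_atTop_of_neg (by norm_num))

lemma hasDerivAt_exp_neg_sq_div_two (x : ℝ) :
    HasDerivAt (fun x : ℝ => exp (-x ^ 2 / 2)) (-x * exp (-x ^ 2 / 2)) x := by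
  have h : HasDerivAt (fun x : ℝ => -x ^ 2 / 2) (-x) x :=
    (((hasDerivAt_id x).pow 2).neg.div_const 2).congr_deriv (by simp; ring)
  exact h.exp.congr_deriv (mul_comm _ _)

lemma integral_Ioi_mul_exp_neg_sq_div_two (l : ℝ) :
    ∫ y in Ioi l, y * exp (-y ^ 2 / 2) = exp (-l ^ 2 / 2) := by
  have hderiv (y : ℝ) (_ : y ∈ Ici l) :
      HasDerivAt (fun y : ℝ => -exp (-y ^ 2 / 2)) (y * exp (-y ^ 2 / 2)) y :=
    (hasDerivAt_exp_neg_sq_div_two y).neg.congr_deriv (by ring)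
  have hlim : Tendsto (fun y : ℝ => -exp (-y ^ 2 / 2)) atTop (𝓝 0) := by
    simpa using (tendsto_rpow_mul_exp_neg_sq_div_two 0).neg
  rw [integral_Ioi_of_hasDerivAt_of_tendsto' hderiv
    integrable_mul_exp_neg_sq_div_two.integrableOn hlim]
  ring

lemma integral_Ioi_sub_mul_mul_exp_neg_sq_div_two (l : ℝ) :
    ∫ y in Ioi l, (y - l) * (y * exp (-y ^ 2 / 2)) = ∫ y in Ioi l, exp (-y ^ 2 / 2) := by
  have hderiv (y : ℝ) (_ : y ∈ Ici l) :
      HasDerivAt (fun y : ℝ => -(y - l) * exp (-y ^ 2 / 2))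
        ((y - l) * (y * exp (-y ^ 2 / 2)) - exp (-y ^ 2 / 2)) y :=
    (((hasDerivAt_id y).sub_const l).neg.mul (hasDerivAt_exp_neg_sq_div_two y)).congr_deriv
      (by simp only [Pi.neg_apply, id]; ring)
  have hint : Integrable fun y : ℝ => (y - l) * (y * exp (-y ^ 2 / 2)) := by
    refine (integrable_sq_mul_exp_neg_sq_div_two.sub
      (integrable_mul_exp_neg_sq_div_two.const_mul l)).congr (ae_of_all _ fun y => ?_)
    simp only [Pi.sub_apply]; ring
  have hlim : Tendsto (fun y : ℝ => -(y - l) * exp (-y ^ 2 / 2)) atTop (𝓝 0) := by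
    have := ((tendsto_rpow_mul_exp_neg_sq_div_two 0).const_mul l).sub
      (tendsto_rpow_mul_exp_neg_sq_div_two 1)
    simp only [rpow_zero, rpow_one, mul_zero, sub_zero] at this
    exact this.congr fun y => by ring
  have h := integral_Ioi_of_hasDerivAt_of_tendsto' hderiv
    (hint.sub integrable_exp_neg_sq_div_two).integrableOn hlim
  rw [integral_sub hint.integrableOn integrable_exp_neg_sq_div_two.integrableOn] at h
  simp only [sub_self, neg_zero, zero_mul] at h
  linarith

lemma sq_mul_exp_neg_sq_div_two_le (t : ℝ) :
    t ^ 2 * exp (-t ^ 2 / 2) ≤ 4 * exp (-t ^ 2 / 4) := by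
  have h : t ^ 2 ≤ 4 * exp (t ^ 2 / 4) := by linarith [add_one_le_exp (t ^ 2 / 4)]
  calc t ^ 2 * exp (-t ^ 2 / 2) ≤ 4 * exp (t ^ 2 / 4) * exp (-t ^ 2 / 2) :=
        mul_le_mul_of_nonneg_right h (exp_pos _).le
    _ = 4 * exp (-t ^ 2 / 4) := by rw [mul_assoc, ← exp_add]; ring_nf

lemma exp_neg_add_sq_div_four_le {a b : ℝ} (hab : 0 ≤ a * b) :
    exp (-(a + b) ^ 2 / 4) ≤ exp (-a ^ 2 / 4) * exp (-b ^ 2 / 4) := by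
  rw [← exp_add]
  exact exp_le_exp.2 (by nlinarith)

lemma integrable_exp_neg_sq_div_four_mul_exp_neg_sq_div_four :
    Integrable fun p : ℝ × ℝ => exp (-p.1 ^ 2 / 4) * exp (-p.2 ^ 2 / 4) := by
  have h : Integrable fun x : ℝ => exp (-x ^ 2 / 4) := by
    have := integrable_exp_neg_mul_sq (b := 1 / 4) (by norm_num)
    exact this.congr (ae_of_all _ fun x => by ring_nf)
  rw [Measure.volume_eq_prod]
  exact h.mul_prod h

lemma integral_jointDensity (l : ℝ) :
    ∫ x, jointDensity x l = 2 / √(2 * π) * exp (-l ^ 2 / 2) := by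
  simp only [jointDensity, mul_assoc]
  rw [integral_comp_abs_add (fun y => 1 / √(2 * π) * (y * exp (-y ^ 2 / 2))), integral_const_mul,
    integral_Ioi_mul_exp_neg_sq_div_two]
  ring

lemma integral_jointDensity_mul_abs (l : ℝ) :
    ∫ x, jointDensity x l * |x| = 2 / √(2 * π) * ∫ y in Ioi l, exp (-y ^ 2 / 2) := by
  have h (x : ℝ) : jointDensity x l * |x|
      = 1 / √(2 * π) * ((|x| + l - l) * ((|x| + l) * exp (-(|x| + l) ^ 2 / 2))) := by
    rw [jointDensity, add_sub_cancel_right]; ring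
  simp only [h]
  rw [integral_comp_abs_add (fun y => 1 / √(2 * π) * ((y - l) * (y * exp (-y ^ 2 / 2)))),
    integral_const_mul, integral_Ioi_sub_mul_mul_exp_neg_sq_div_two]
  ring

noncomputable def jointDensityExt (p : ℝ × ℝ) : ℝ :=
  if 0 ≤ p.2 then jointDensity p.1 p.2 else 0

lemma jointDensityExt_nonneg (p : ℝ × ℝ) : 0 ≤ jointDensityExt p := by
  unfold jointDensityExt jointDensity
  split_ifs with h
  · positivity
  · rfl

lemma measurable_jointDensityExt : Measurable jointDensityExt := by
  refine Measurable.ite (measurableSet_le measurable_const measurable_snd) ?_ measurable_const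
  unfold jointDensity
  fun_prop

lemma integrable_jointDensityExt_mul_abs_add_abs :
    Integrable fun p : ℝ × ℝ => jointDensityExt p * (|p.1| + |p.2|) := by
  refine (integrable_exp_neg_sq_div_four_mul_exp_neg_sq_div_four.const_mul
    (4 / √(2 * π))).mono' (measurable_jointDensityExt.mul (by fun_prop)).aestronglyMeasurable
    (ae_of_all _ fun ⟨x, l⟩ => ?_)
  dsimp only
  rw [norm_mul, norm_eq_abs, norm_eq_abs, abs_of_nonneg (jointDensityExt_nonneg _),
    abs_of_nonneg (by positivity : (0 : ℝ) ≤ |x| + |l|)]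
  by_cases hl : 0 ≤ l
  · have hprod := exp_neg_add_sq_div_four_le (mul_nonneg (abs_nonneg x) hl)
    rw [sq_abs] at hprod
    calc jointDensityExt (x, l) * (|x| + |l|)
        = 1 / √(2 * π) * ((|x| + l) ^ 2 * exp (-(|x| + l) ^ 2 / 2)) := by
          simp only [jointDensityExt, jointDensity, if_pos hl, abs_of_nonneg hl]; ring
      _ ≤ 1 / √(2 * π) * (4 * (exp (-x ^ 2 / 4) * exp (-l ^ 2 / 4))) := by
          refine mul_le_mul_of_nonneg_left ?_ (by positivity)
          exact (sq_mul_exp_neg_sq_div_two_le _).trans (by gcongr)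
      _ = 4 / √(2 * π) * (exp (-x ^ 2 / 4) * exp (-l ^ 2 / 4)) := by ring
  · simp only [jointDensityExt, if_neg hl, zero_mul]
    positivity

lemma integrable_jointDensityExt_mul {F : ℝ × ℝ → ℝ} {C : ℝ}
    (hF : AEStronglyMeasurable F) (hFC : ∀ p, |F p| ≤ C * (|p.1| + |p.2|)) :
    Integrable fun p => jointDensityExt p * F p := by
  refine (integrable_jointDensityExt_mul_abs_add_abs.const_mul C).mono'
    (measurable_jointDensityExt.aestronglyMeasurable.mul hF) (ae_of_all _ fun p => ?_)
  rw [norm_mul, norm_eq_abs, norm_eq_abs, abs_of_nonneg (jointDensityExt_nonneg p)]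
  calc jointDensityExt p * |F p| ≤ jointDensityExt p * (C * (|p.1| + |p.2|)) :=
        mul_le_mul_of_nonneg_left (hFC p) (jointDensityExt_nonneg p)
    _ = C * (jointDensityExt p * (|p.1| + |p.2|)) := by ring

lemma integral_jointDensityExt_mul {F : ℝ × ℝ → ℝ}
    (hF : Integrable fun p => jointDensityExt p * F p) :
    ∫ p, jointDensityExt p * F p = ∫ l in Ioi 0, ∫ x, jointDensity x l * F (x, l) := by
  rw [Measure.volume_eq_prod] at hF ⊢
  rw [integral_prod_symm _ hF, ← integral_Ici_eq_integral_Ioi,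
    ← integral_indicator measurableSet_Ici]
  congr 1 with l
  by_cases hl : 0 ≤ l <;> simp [jointDensityExt, hl]

lemma integral_jointDensityExt_mul_snd {w : ℝ → ℝ}
    (hw : Integrable fun p => jointDensityExt p * w p.2) :
    ∫ p, jointDensityExt p * w p.2
      = 2 / √(2 * π) * ∫ l in Ioi 0, w l * exp (-l ^ 2 / 2) := by
  rw [integral_jointDensityExt_mul hw, ← integral_const_mul]
  congr 1 with l
  simp only [integral_mul_const, integral_jointDensity]
  ring

lemma integral_jointDensityExt_mul_mul_abs_fst {w : ℝ → ℝ}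
    (hw : Integrable fun p => jointDensityExt p * (w p.2 * |p.1|)) :
    ∫ p, jointDensityExt p * (w p.2 * |p.1|)
      = 2 / √(2 * π) * ∫ l in Ioi 0, w l * ∫ y in Ioi l, exp (-y ^ 2 / 2) := by
  rw [integral_jointDensityExt_mul hw, ← integral_const_mul]
  congr 1 with l
  simp only [mul_left_comm _ (w l), integral_const_mul, integral_jointDensity_mul_abs]

theorem balayage_identity_general {Ω : Type*} [MeasureSpace Ω]
    (X L : Ω → ℝ) (hX : Measurable X) (hL : Measurable L)
    (hlaw : Measure.map (fun ω => (X ω, L ω)) ℙ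
      = (volume : Measure (ℝ × ℝ)).withDensity
          (fun p => ENNReal.ofReal (if 0 ≤ p.2 then jointDensity p.1 p.2 else 0)))
    (φ : ℝ → ℝ) (hφ : Measurable φ) (hφb : ∃ C, ∀ x, |φ x| ≤ C) :
    ∫ ω, φ (L ω) * |X ω| ∂ℙ = ∫ ω, (∫ x in (0:ℝ)..(L ω), φ x) ∂ℙ := by
  obtain ⟨C, hC⟩ := hφb
  have hC0 : 0 ≤ C := (abs_nonneg _).trans (hC 0)
  have hΦ : Continuous fun l => ∫ u in (0 : ℝ)..l, φ u :=
    intervalIntegral.continuous_primitive (fun _ _ => intervalIntegrable_const.mono_fun'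
      hφ.aestronglyMeasurable (ae_of_all _ hC)) 0
  have hΦC (l : ℝ) : |∫ u in (0 : ℝ)..l, φ u| ≤ C * |l| := by
    simpa using intervalIntegral.norm_integral_le_of_norm_le_const (a := 0) (b := l)
      fun x _ => (norm_eq_abs (φ x)).trans_le (hC x)
  have transfer {g : ℝ × ℝ → ℝ} (hg : Measurable g) :=
    integral_comp_eq_integral_mul_of_map_eq_withDensity (hX.prodMk hL).aemeasurable
      measurable_jointDensityExt jointDensityExt_nonneg hlaw hg.aestronglyMeasurable
  have hint_lhs : Integrable fun p => jointDensityExt p * (φ p.2 * |p.1|) :=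
    integrable_jointDensityExt_mul (by fun_prop) fun p => by
      rw [abs_mul, abs_abs]
      nlinarith [hC p.2, abs_nonneg p.1, abs_nonneg p.2]
  have hint_rhs : Integrable fun p => jointDensityExt p * ∫ u in (0 : ℝ)..p.2, φ u :=
    integrable_jointDensityExt_mul (hΦ.comp continuous_snd).aestronglyMeasurable fun p =>
      (hΦC p.2).trans (by nlinarith [abs_nonneg p.1])
  rw [transfer (g := fun p => φ p.2 * |p.1|) (by fun_prop),
    transfer (g := fun p => ∫ u in (0 : ℝ)..p.2, φ u) (hΦ.measurable.comp measurable_snd),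
    integral_jointDensityExt_mul_mul_abs_fst hint_lhs,
    integral_jointDensityExt_mul_snd (w := fun l => ∫ u in (0 : ℝ)..l, φ u) hint_rhs,
    integral_Ioi_intervalIntegral_mul_eq hφ hC (by fun_prop)
      integrable_mul_exp_neg_sq_div_two.integrableOn]

/-- If `(X, L)` has density `h(x,l)` (supported on `ℝ × [0,∞)`) with respect to Lebesgue
measure, then for every bounded measurable `φ`, `E[φ(L)·|X|] = E[∫_0^L φ(x) dx]`. -/
theorem balayage_identity {Ω : Type*} [MeasureSpace Ω]
    [IsProbabilityMeasure (ℙ : Measure Ω)]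
    (X L : Ω → ℝ) (hX : Measurable X) (hL : Measurable L)
    (hlaw : Measure.map (fun ω => (X ω, L ω)) ℙ
      = (volume : Measure (ℝ × ℝ)).withDensity
          (fun p => ENNReal.ofReal (if 0 ≤ p.2 then jointDensity p.1 p.2 else 0)))
    (φ : ℝ → ℝ) (hφ : Measurable φ) (hφb : ∃ C, ∀ x, |φ x| ≤ C) :
    ∫ ω, φ (L ω) * |X ω| ∂ℙ = ∫ ω, (∫ x in (0:ℝ)..(L ω), φ x) ∂ℙ :=
  balayage_identity_general X L hX hL hlaw φ hφ hφb
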